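/- For every real number μ₀ ∈ [2, ∞], there exists an irrational number α with irrationality exponent μ(α) = μ₀. In particular, there exist Liouville numbers, i.e., irrationals α with μ(α) = ∞. -/

import Mathlib

/-- The set of exponents `ν` such that `|α − p/q| < 1/q^ν` has infinitely many
rational solutions `p/q ≠ α` with `q ≥ 1`. -/
def approxExponents (α : ℝ) : Set ℝ :=
  {ν | {pq : ℤ × ℕ | 1 ≤ pq.2 ∧ (pq.1 : ℝ) / pq.2 ≠ α ∧
    |α - (pq.1 : ℝ) / pq.2| < 1 / (pq.2 : ℝ) ^ ν}.Infinite}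

/-- The irrationality exponent (irrationality measure) `μ(α)` of a real number `α`,
as an extended real number. -/
noncomputable def irrationalityExponent (α : ℝ) : EReal :=
  sSup ((fun ν : ℝ => (ν : EReal)) '' approxExponents α)

open Filter Real

namespace IrrExp

variable (f : ℕ → ℕ → ℕ)

def S : ℕ → ℕ × ℕ
  | 0 => (1, 1)
  | n+1 => ((S n).2, f n (S n).2 * (S n).2 + (S n).1)

def qd (n : ℕ) : ℕ := (S f n).1
def ad (n : ℕ) : ℕ := f n (qd f (n+1))

lemma qd_zero : qd f 0 = 1 := rfl
lemma qd_one : qd f 1 = 1 := rfl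
lemma qd_succ_succ (n : ℕ) : qd f (n+2) = ad f n * qd f (n+1) + qd f n := rfl

def P : ℕ → ℤ × ℤ
  | 0 => (0, 1)
  | n+1 => ((P n).2, ad f (n) * (P n).2 + (P n).1)

def pd (n : ℕ) : ℤ := (P f n).1
lemma pd_zero : pd f 0 = 0 := rfl
lemma pd_one : pd f 1 = 1 := rfl
lemma pd_succ_succ (n : ℕ) : pd f (n+2) = ad f n * pd f (n+1) + pd f n := rfl

variable {f}

/-- the standing hypothesis on the choice of partial quotients -/
def Hf (f : ℕ → ℕ → ℕ) : Prop := ∀ n x, 1 ≤ x → 1 ≤ f n x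

lemma one_le_qd (n : ℕ) : 1 ≤ qd f n := by
  induction n using Nat.twoStepInduction with
  | zero => exact le_refl 1
  | one => exact le_refl 1
  | more n ih _ => rw [qd_succ_succ]; omega

lemma one_le_ad (hf : Hf f) (n : ℕ) : 1 ≤ ad f n := hf _ _ (one_le_qd _)

lemma qd_le_succ (hf : Hf f) (n : ℕ) : qd f n ≤ qd f (n+1) := by
  cases n with
  | zero => exact le_refl 1
  | succ n =>
      rw [qd_succ_succ]
      have h1 := one_le_ad hf n
      have h2 := one_le_qd (f := f) n
      nlinarith

lemma qd_lt_succ (hf : Hf f) (n : ℕ) : qd f (n+1) < qd f (n+2) := by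
  rw [qd_succ_succ]
  have h1 := one_le_ad hf n
  have h2 := one_le_qd (f := f) n
  have h3 := one_le_qd (f := f) (n+1)
  nlinarith

lemma n_le_qd (hf : Hf f) (n : ℕ) : n ≤ qd f (n+1) := by
  induction n with
  | zero => omega
  | succ n ih =>
      have := qd_lt_succ hf n
      show n + 1 ≤ qd f (n + 2)
      omega

lemma det (n : ℕ) : pd f (n+1) * (qd f n : ℤ) - pd f n * (qd f (n+1) : ℤ) = (-1)^n := by
  induction n with
  | zero => simp [pd_zero, pd_one, qd_zero, qd_one]
  | succ n ih =>
      rw [pd_succ_succ, qd_succ_succ, pow_succ]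
      push_cast
      linear_combination (-1 : ℤ) * ih

variable (f) in
noncomputable def xc (n : ℕ) : ℝ := (pd f n : ℝ) / (qd f n : ℝ)

variable (f) in
noncomputable def uc (n : ℕ) : ℝ := (qd f n : ℝ) * (qd f (n+1) : ℝ)

lemma qd_pos_real (n : ℕ) : (0:ℝ) < qd f n := by
  exact_mod_cast Nat.lt_of_lt_of_le Nat.zero_lt_one (one_le_qd n)

lemma one_le_qd_real (n : ℕ) : (1:ℝ) ≤ qd f n := by
  exact_mod_cast one_le_qd (f := f) n

lemma uc_pos (n : ℕ) : 0 < uc f n :=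
  mul_pos (qd_pos_real n) (qd_pos_real (n+1))

lemma xc_sub (n : ℕ) : xc f (n+1) - xc f n = (-1)^n / uc f n := by
  have hd := det (f := f) n
  have h1 := (qd_pos_real (f := f) n).ne'
  have h2 := (qd_pos_real (f := f) (n+1)).ne'
  have hdr : (pd f (n+1) : ℝ) * (qd f n : ℝ) - (pd f n : ℝ) * (qd f (n+1) : ℝ) = (-1)^n := by
    exact_mod_cast congrArg (fun z : ℤ => (z : ℝ)) hd
  rw [xc, xc, uc]
  field_simp
  linear_combination hdr

lemma uc_two (hf : Hf f) (n : ℕ) : 2 * uc f n ≤ uc f (n+1) := by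
  have h1 : qd f (n+1) + qd f n ≤ qd f (n+2) := by
    rw [qd_succ_succ]
    have := one_le_ad hf n
    nlinarith
  have h2 := qd_le_succ hf n
  have h3 := qd_pos_real (f := f) (n+1)
  have h4 := qd_pos_real (f := f) n
  rw [uc, uc]
  have h1' : (qd f (n+1) : ℝ) + qd f n ≤ qd f (n+2) := by exact_mod_cast h1
  have h2' : (qd f n : ℝ) ≤ qd f (n+1) := by exact_mod_cast h2
  nlinarith

lemma uc_ge_pow (hf : Hf f) (n : ℕ) : (2:ℝ)^n ≤ uc f n := by
  induction n with
  | zero => simp [uc, qd_zero, qd_one]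
  | succ n ih =>
      have := uc_two hf n
      rw [pow_succ]
      nlinarith

lemma uc_mono (hf : Hf f) (n : ℕ) : uc f n < uc f (n+1) := by
  have h := uc_two hf n
  have := uc_pos (f := f) n
  linarith

lemma cauchy_xc (hf : Hf f) : CauchySeq (xc f) := by
  apply cauchySeq_of_le_geometric (1/2 : ℝ) 1 (by norm_num)
  intro n
  rw [Real.dist_eq, abs_sub_comm, xc_sub n]
  rw [abs_div, abs_pow, abs_neg, abs_one, one_pow]
  rw [abs_of_pos (uc_pos n)]
  rw [one_mul, div_pow, one_pow]
  rw [div_le_div_iff₀ (uc_pos n) (by positivity)]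
  have := uc_ge_pow hf n
  nlinarith [pow_pos (show (0:ℝ) < 2 by norm_num) n]

variable (f) in
noncomputable def αc : ℝ := limUnder atTop (xc f)

lemma tendsto_xc (hf : Hf f) : Tendsto (xc f) atTop (nhds (αc f)) :=
  (cauchy_xc hf).tendsto_limUnder

variable (f) in
noncomputable def Ec (n : ℕ) : ℝ := (-1)^n * (αc f - xc f n)

lemma partial_bounds (hf : Hf f) : ∀ (k n : ℕ),
    1/uc f n - 1/uc f (n+1) ≤ (-1)^n * (xc f (n+k+1) - xc f n) ∧
    (-1)^n * (xc f (n+k+1) - xc f n) ≤ 1/uc f n := by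
  intro k
  induction k with
  | zero =>
      intro n
      have hx := xc_sub (f := f) n
      have h1 := uc_pos (f := f) n
      have h2 := uc_pos (f := f) (n+1)
      have hsq : ((-1:ℝ)^n) * ((-1:ℝ)^n) = 1 := by
        rw [← pow_add, ← two_mul, pow_mul]; norm_num
      constructor
      · rw [show n + 0 + 1 = n + 1 from rfl, hx, ← mul_div_assoc, hsq]
        have : 0 < 1/uc f (n+1) := by positivity
        linarith
      · rw [show n + 0 + 1 = n + 1 from rfl, hx, ← mul_div_assoc, hsq]
  | succ k ih =>
      intro n
      have hrw : n + (k+1) + 1 = (n+1) + k + 1 := by omega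
      have hx := xc_sub (f := f) n
      have hih := ih (n+1)
      have hsq : ((-1:ℝ)^n) * ((-1:ℝ)^n) = 1 := by
        rw [← pow_add, ← two_mul, pow_mul]; norm_num
      have hps : ((-1:ℝ)^(n+1)) = -((-1:ℝ)^n) := by rw [pow_succ]; ring
      have h1 := uc_pos (f := f) n
      have h2 := uc_pos (f := f) (n+1)
      have h3 := uc_pos (f := f) (n+2)
      have hmono := uc_mono hf (n+1)
      have key : (-1:ℝ)^n * (xc f (n + (k+1) + 1) - xc f n)
          = 1/uc f n - (-1:ℝ)^(n+1) * (xc f ((n+1) + k + 1) - xc f (n+1)) := by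
        rw [hrw, hps]
        have heq : xc f ((n+1)+k+1) - xc f n
            = (xc f ((n+1)+k+1) - xc f (n+1)) + (xc f (n+1) - xc f n) := by ring
        rw [heq, mul_add, hx, ← mul_div_assoc, hsq]
        ring
      rw [key]
      constructor
      · have := hih.2
        linarith
      · have := hih.1
        have hmi : 1/uc f (n+2) < 1/uc f (n+1) :=
          one_div_lt_one_div_of_lt h2 hmono
        linarith

lemma Ec_bounds (hf : Hf f) (n : ℕ) :
    1/uc f n - 1/uc f (n+1) ≤ Ec f n ∧ Ec f n ≤ 1/uc f n := by
  have ht : Tendsto (fun k => (-1:ℝ)^n * (xc f (n+k+1) - xc f n)) atTop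
      (nhds (Ec f n)) := by
    rw [Ec]
    apply Tendsto.mul tendsto_const_nhds
    apply Tendsto.sub_const
    apply (tendsto_xc hf).comp
    exact tendsto_atTop_mono (fun k => by omega : ∀ k : ℕ, k ≤ n + k + 1) tendsto_id
  constructor
  · exact ge_of_tendsto ht (Eventually.of_forall fun k => (partial_bounds hf k n).1)
  · exact le_of_tendsto ht (Eventually.of_forall fun k => (partial_bounds hf k n).2)

lemma Ec_pos (hf : Hf f) (n : ℕ) : 0 < Ec f n := by
  have h := (Ec_bounds hf n).1
  have hmi : 1/uc f (n+1) < 1/uc f n :=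
    one_div_lt_one_div_of_lt (uc_pos n) (uc_mono hf n)
  linarith

lemma Ec_identity (hf : Hf f) (n : ℕ) : Ec f n + Ec f (n+1) = 1/uc f n := by
  have hx := xc_sub (f := f) n
  have hsq : ((-1:ℝ)^n) * ((-1:ℝ)^n) = 1 := by
    rw [← pow_add, ← two_mul, pow_mul]; norm_num
  rw [Ec, Ec, pow_succ]
  have : (-1:ℝ)^n * (αc f - xc f n) + (-1)^n * (-1) * (αc f - xc f (n+1))
      = (-1:ℝ)^n * (xc f (n+1) - xc f n) := by ring
  rw [this, hx, ← mul_div_assoc, hsq]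

lemma Ec_lt (hf : Hf f) (n : ℕ) : Ec f n < 1/uc f n := by
  have := Ec_identity hf n
  have := Ec_pos hf (n+1)
  linarith

lemma abs_sub_xc (hf : Hf f) (n : ℕ) : |αc f - xc f n| = Ec f n := by
  have h : |αc f - xc f n| = |Ec f n| := by
    rw [Ec, abs_mul, abs_pow, abs_neg, abs_one, one_pow, one_mul]
  rw [h, abs_of_pos (Ec_pos hf n)]

lemma xc_ne (hf : Hf f) (n : ℕ) : xc f n ≠ αc f := by
  intro h
  have := Ec_pos hf n
  rw [Ec, h] at this
  simp at this

lemma abs_comb {A B : ℝ} {s t qn qn1 Q : ℤ} (hA : 0 < A) (hB : 0 < B)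
    (hq1 : 1 ≤ qn) (hq2 : 1 ≤ qn1) (hQ1 : 1 ≤ Q) (hQ2 : Q < qn1)
    (hsq : s * qn + t * qn1 = Q) :
    A ≤ |(s:ℝ) * A - (t:ℝ) * B| := by
  rcases eq_or_ne t 0 with ht0 | ht0
  · rw [ht0] at hsq
    have hs1 : 1 ≤ s := by nlinarith
    have hs1R : (1:ℝ) ≤ (s:ℝ) := by exact_mod_cast hs1
    have ht0R : ((t:ℝ)) = 0 := by rw [ht0]; norm_num
    rw [ht0R, zero_mul, sub_zero, abs_of_pos (by nlinarith)]
    nlinarith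
  · rcases eq_or_ne s 0 with hs0 | hs0
    · rw [hs0, zero_mul, zero_add] at hsq
      have ht1 : 1 ≤ t := by nlinarith
      exfalso; nlinarith
    · have hscases : 1 ≤ s ∨ s ≤ -1 := by omega
      have htcases : 1 ≤ t ∨ t ≤ -1 := by omega
      rcases hscases with hs1 | hs1 <;> rcases htcases with ht1 | ht1
      · exfalso; nlinarith
      · have hs1R : (1:ℝ) ≤ (s:ℝ) := by exact_mod_cast hs1
        have ht1R : (t:ℝ) ≤ -1 := by exact_mod_cast ht1
        rw [abs_of_pos (by nlinarith)]
        nlinarith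
      · have hs1R : (s:ℝ) ≤ -1 := by exact_mod_cast hs1
        have ht1R : (1:ℝ) ≤ (t:ℝ) := by exact_mod_cast ht1
        rw [abs_of_neg (by nlinarith)]
        nlinarith
      · exfalso; nlinarith

lemma abs_e_le (hf : Hf f) (n : ℕ) (p : ℤ) (Q : ℕ) (hQ1 : 1 ≤ Q)
    (hQ2 : Q < qd f (n+1)) :
    (qd f n : ℝ) * Ec f n ≤ |(Q : ℝ) * αc f - (p : ℝ)| := by
  obtain ⟨ε, hee, hdet, hεR⟩ : ∃ ε : ℤ, ε * ε = 1 ∧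
      pd f (n+1) * (qd f n : ℤ) - pd f n * (qd f (n+1) : ℤ) = ε ∧
      (ε : ℝ) = (-1:ℝ)^n := by
    refine ⟨(-1)^n, ?_, det n, by push_cast; ring⟩
    rw [← pow_add, ← two_mul, pow_mul]; norm_num
  obtain ⟨s, t, hsq, hsp⟩ : ∃ s t : ℤ,
      (s * (qd f n : ℤ) + t * (qd f (n+1) : ℤ) = (Q : ℤ)) ∧
      (s * pd f n + t * pd f (n+1) = p) := by
    refine ⟨-ε * (p * (qd f (n+1) : ℤ) - (Q : ℤ) * pd f (n+1)),
      -ε * ((Q : ℤ) * pd f n - p * (qd f n : ℤ)), ?_, ?_⟩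
    · linear_combination (ε * (Q:ℤ)) * hdet + (Q:ℤ) * hee
    · linear_combination (ε * p) * hdet + p * hee
  have hApos : 0 < (qd f n : ℝ) * Ec f n := mul_pos (qd_pos_real n) (Ec_pos hf n)
  have hBpos : 0 < (qd f (n+1) : ℝ) * Ec f (n+1) :=
    mul_pos (qd_pos_real (n+1)) (Ec_pos hf (n+1))
  have hsqR : ((-1:ℝ)^n) * ((-1:ℝ)^n) = 1 := by
    rw [← pow_add, ← two_mul, pow_mul]; norm_num
  have hx1 : (qd f n : ℝ) * xc f n = pd f n := by
    rw [xc, mul_comm, div_mul_cancel₀ _ (qd_pos_real (f := f) n).ne']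
  have hx2 : (qd f (n+1) : ℝ) * xc f (n+1) = pd f (n+1) := by
    rw [xc, mul_comm, div_mul_cancel₀ _ (qd_pos_real (f := f) (n+1)).ne']
  have h1 : (qd f n : ℝ) * αc f - pd f n = (ε:ℝ) * ((qd f n : ℝ) * Ec f n) := by
    rw [hεR, Ec]
    linear_combination hx1 - ((qd f n : ℝ) * (αc f - xc f n)) * hsqR
  have h2 : (qd f (n+1) : ℝ) * αc f - pd f (n+1)
      = -((ε:ℝ) * ((qd f (n+1) : ℝ) * Ec f (n+1))) := by
    rw [hεR, Ec, pow_succ]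
    linear_combination hx2 - ((qd f (n+1) : ℝ) * (αc f - xc f (n+1))) * hsqR
  have hsqR' : (s:ℝ) * (qd f n : ℝ) + (t:ℝ) * (qd f (n+1) : ℝ) = (Q:ℝ) := by
    exact_mod_cast congrArg (fun z : ℤ => (z:ℝ)) hsq
  have hspR' : (s:ℝ) * (pd f n : ℝ) + (t:ℝ) * (pd f (n+1) : ℝ) = (p:ℝ) := by
    exact_mod_cast congrArg (fun z : ℤ => (z:ℝ)) hsp
  have hQα : (Q : ℝ) * αc f - (p : ℝ)
      = (ε:ℝ) * ((s:ℝ) * ((qd f n : ℝ) * Ec f n) - (t:ℝ) * ((qd f (n+1) : ℝ) * Ec f (n+1))) := by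
    linear_combination (s:ℝ) * h1 + (t:ℝ) * h2 - (αc f) * hsqR' + hspR'
  have hεabs : |(ε:ℝ)| = 1 := by
    rcases Int.isUnit_iff.mp (IsUnit.of_mul_eq_one ε hee) with h | h <;>
      rw [h] <;> norm_num
  rw [hQα, abs_mul, hεabs, one_mul]
  exact abs_comb hApos hBpos (by exact_mod_cast one_le_qd (f := f) n)
    (by exact_mod_cast one_le_qd (f := f) (n+1)) (by exact_mod_cast hQ1)
    (by exact_mod_cast hQ2) hsq

lemma e_lower (hf : Hf f) (n : ℕ) :
    1 / (2 * (qd f (n+1) : ℝ)) ≤ (qd f n : ℝ) * Ec f n := by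
  have hb := (Ec_bounds hf n).1
  have h2q : 2 * qd f n ≤ qd f (n+2) := by
    rw [qd_succ_succ]
    have h1 := one_le_ad hf n
    have h2 := qd_le_succ hf n
    nlinarith
  have h2qR : 2 * (qd f n : ℝ) ≤ (qd f (n+2) : ℝ) := by exact_mod_cast h2q
  have q1 := qd_pos_real (f := f) n
  have q2 := qd_pos_real (f := f) (n+1)
  have q3 := qd_pos_real (f := f) (n+2)
  have key : 1 / (2 * (qd f (n+1) : ℝ)) ≤ (qd f n : ℝ) * (1/uc f n - 1/uc f (n+1)) := by
    have e1 : (qd f n:ℝ) * (1/uc f n - 1/uc f (n+1))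
        = ((qd f (n+2) : ℝ) - qd f n) / ((qd f (n+1) : ℝ) * (qd f (n+2) : ℝ)) := by
      rw [uc, uc]
      simp only [show n+1+1 = n+2 from rfl]
      field_simp
    rw [e1, div_le_div_iff₀ (by positivity) (by positivity)]
    nlinarith
  calc 1 / (2 * (qd f (n+1) : ℝ)) ≤ (qd f n : ℝ) * (1/uc f n - 1/uc f (n+1)) := key
    _ ≤ (qd f n : ℝ) * Ec f n := mul_le_mul_of_nonneg_left hb (le_of_lt q1)

lemma key_lower (hf : Hf f) (p : ℤ) (Q : ℕ) (hQ : 1 ≤ Q) :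
    ∃ n, 1 ≤ n ∧ qd f n ≤ Q ∧ Q < qd f (n+1) ∧
      1 / (2 * (Q:ℝ) * (qd f (n+1) : ℝ)) ≤ |αc f - (p:ℝ)/(Q:ℝ)| := by
  classical
  set n := Nat.findGreatest (fun k => qd f k ≤ Q) (Q+1) with hn
  have hP1 : qd f 1 ≤ Q := by rw [qd_one]; exact hQ
  have hn1 : 1 ≤ n := Nat.le_findGreatest (by omega) hP1
  have hqn : qd f n ≤ Q := by
    rw [hn]
    exact Nat.findGreatest_spec (P := fun k => qd f k ≤ Q) (n := Q+1) (m := 1)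
      (by omega) hP1
  have hQlt : Q < qd f (n + 1) := by
    by_cases hc : n + 1 ≤ Q + 1
    · have := Nat.findGreatest_is_greatest (P := fun k => qd f k ≤ Q)
        (n := Q+1) (k := n+1) (by omega) hc
      omega
    · have hge : Q ≤ n := by omega
      have := n_le_qd hf n
      omega
  refine ⟨n, hn1, hqn, hQlt, ?_⟩
  have habs := abs_e_le hf n p Q hQ hQlt
  have hel := e_lower hf n
  have hQpos : (0:ℝ) < Q := by exact_mod_cast hQ
  have q2 := qd_pos_real (f := f) (n+1)
  have hsplit : αc f - (p:ℝ)/(Q:ℝ) = ((Q:ℝ) * αc f - p) / Q := by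
    field_simp
  rw [hsplit, abs_div, abs_of_pos hQpos]
  have hpos : (0:ℝ) < 2 * (Q:ℝ) * (qd f (n+1) : ℝ) :=
    mul_pos (mul_pos (by norm_num) hQpos) q2
  rw [div_le_div_iff₀ hpos hQpos]
  have h := le_trans hel habs
  rw [div_le_iff₀ (mul_pos (by norm_num : (0:ℝ) < 2) q2)] at h
  nlinarith [abs_nonneg ((Q:ℝ) * αc f - p)]

lemma irrational_αc (hf : Hf f) : Irrational (αc f) := by
  rw [Irrational]
  rintro ⟨x, hx⟩
  obtain ⟨n, -, -, -, hlow⟩ := key_lower hf x.num x.den x.pos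
  have hxx : (x.num : ℝ) / (x.den : ℝ) = (x : ℝ) := by
    rw [Rat.cast_def]
  rw [hxx, hx] at hlow
  simp only [sub_self, abs_zero] at hlow
  have q2 := qd_pos_real (f := f) (n+1)
  have hd : (0:ℝ) < x.den := by exact_mod_cast x.pos
  have hp : (0:ℝ) < 2 * (x.den:ℝ) * (qd f (n+1) : ℝ) :=
    mul_pos (mul_pos (by norm_num) hd) q2
  have := div_pos one_pos hp
  linarith

lemma mem_approx (hf : Hf f) (ν : ℝ) (K : ℕ) (hK : 1 ≤ K)
    (h : ∀ k, K ≤ k → ((qd f k : ℝ)) ^ ν ≤ uc f k) :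
    ν ∈ approxExponents (αc f) := by
  apply Set.infinite_of_injective_forall_mem
    (f := fun j : ℕ => ((pd f (j+K), qd f (j+K)) : ℤ × ℕ))
  · -- injective
    have hmono : StrictMono (fun j : ℕ => qd f (j+K)) := by
      apply strictMono_nat_of_lt_succ
      intro j
      obtain ⟨K', rfl⟩ := Nat.exists_eq_add_of_le hK
      have := qd_lt_succ hf (j + K')
      have e1 : j + (1 + K') = (j + K') + 1 := by omega
      have e2 : j + 1 + (1 + K') = (j + K') + 2 := by omega
      rw [e1, e2]
      exact this
    intro a b hab
    have : qd f (a+K) = qd f (b+K) := congrArg Prod.snd hab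
    exact hmono.injective this
  · intro j
    refine ⟨one_le_qd _, ?_, ?_⟩
    · exact xc_ne hf (j+K)
    · show |αc f - xc f (j+K)| < 1 / ((qd f (j+K) : ℝ)) ^ ν
      rw [abs_sub_xc hf]
      calc Ec f (j+K) < 1 / uc f (j+K) := Ec_lt hf (j+K)
        _ ≤ 1 / ((qd f (j+K) : ℝ)) ^ ν := by
            apply one_div_le_one_div_of_le
            · exact rpow_pos_of_pos (qd_pos_real _) ν
            · exact h (j+K) (by omega)

lemma not_mem_approx (α : ℝ) {μ ν : ℝ} (hμ : 0 ≤ μ) (hν : μ < ν)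
    (hb : ∀ (p : ℤ) (Q : ℕ), 1 ≤ Q → 1/(6*(Q:ℝ)^μ) ≤ |α - (p:ℝ)/(Q:ℝ)|) :
    ν ∉ approxExponents α := by
  intro hmem
  set B : ℕ := ⌈(6:ℝ)^(1/(ν-μ))⌉₊ with hB
  set M : ℤ := ⌈(B:ℝ)*(|α|+1)⌉ with hM
  have hfin : {pq : ℤ × ℕ | 1 ≤ pq.2 ∧ (pq.1 : ℝ) / pq.2 ≠ α ∧
      |α - (pq.1 : ℝ) / pq.2| < 1 / (pq.2 : ℝ) ^ ν}.Finite := by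
    apply Set.Finite.subset ((Set.finite_Icc (-M) M).prod (Set.finite_Icc 1 B))
    rintro ⟨p, Q⟩ ⟨hQ1, -, habs⟩
    simp only [Set.prodMk_mem_set_prod_eq, Set.mem_Icc]
    have hQR : (1:ℝ) ≤ Q := by exact_mod_cast hQ1
    have hQpos : (0:ℝ) < Q := by linarith
    have hlow := hb p Q hQ1
    have hQν : (1:ℝ) ≤ (Q:ℝ)^ν := one_le_rpow hQR (by linarith)
    have hQμ : (0:ℝ) < (Q:ℝ)^μ := rpow_pos_of_pos hQpos μ
    have hQbound : (Q:ℝ) ≤ (6:ℝ)^(1/(ν-μ)) := by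
      by_contra hcon
      push_neg at hcon
      have h6 : ((6:ℝ)^(1/(ν-μ)))^(ν-μ) = 6 := by
        rw [← Real.rpow_mul (by norm_num), one_div_mul_cancel (sub_ne_zero.mpr hν.ne'),
          Real.rpow_one]
      have hlt : (6:ℝ) < (Q:ℝ)^(ν-μ) := by
        rw [← h6]
        exact rpow_lt_rpow (by positivity) hcon (by linarith)
      have hsplit : (Q:ℝ)^ν = (Q:ℝ)^μ * (Q:ℝ)^(ν-μ) := by
        rw [← rpow_add hQpos]; ring_nf
      have hchain : 1/(Q:ℝ)^ν ≤ |α - (p:ℝ)/(Q:ℝ)| := by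
        calc 1/(Q:ℝ)^ν ≤ 1/(6*(Q:ℝ)^μ) := by
              apply one_div_le_one_div_of_le (by positivity)
              rw [hsplit]
              nlinarith
          _ ≤ |α - (p:ℝ)/(Q:ℝ)| := hlow
      linarith
    have hQB : Q ≤ B := by
      have h := hQbound.trans (Nat.le_ceil _)
      exact_mod_cast h
    have habs1 : |α - (p:ℝ)/(Q:ℝ)| < 1 := lt_of_lt_of_le habs (by
      apply div_le_one_of_le₀ hQν (by positivity))
    have hpb : |(p:ℝ)| ≤ (Q:ℝ) * (|α|+1) := by
      have h1 : |(p:ℝ)/(Q:ℝ)| ≤ |α| + 1 := by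
        have h3 := abs_sub_abs_le_abs_sub ((p:ℝ)/(Q:ℝ)) α
        have h2 : |(p:ℝ)/(Q:ℝ) - α| < 1 := by rwa [abs_sub_comm] at habs1
        linarith
      rw [abs_div, abs_of_pos hQpos] at h1
      rw [div_le_iff₀ hQpos] at h1
      nlinarith [abs_nonneg α]
    have hQBR : (Q:ℝ) ≤ B := by exact_mod_cast hQB
    have hpB : |(p:ℝ)| ≤ (B:ℝ)*(|α|+1) := by nlinarith [abs_nonneg α, abs_nonneg (p:ℝ)]
    have hMp : |(p:ℝ)| ≤ (M:ℝ) := le_trans hpB (Int.le_ceil _)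
    have hpM : |p| ≤ M := by
      have : ((|p| : ℤ) : ℝ) ≤ (M:ℝ) := by rwa [Int.cast_abs]
      exact_mod_cast this
    obtain ⟨hm1, hm2⟩ := abs_le.mp hpM
    exact ⟨⟨hm1, hm2⟩, hQ1, hQB⟩
  exact hfin.not_infinite hmem

/-! ### Case A : finite exponent `μ ≥ 2` -/

noncomputable def fA (μ : ℝ) : ℕ → ℕ → ℕ := fun _ x => ⌈(x:ℝ)^(μ-2)⌉₊

lemma hfA {μ : ℝ} (hμ : 2 ≤ μ) : Hf (fA μ) := by
  intro n x hx
  rw [fA, Nat.one_le_ceil_iff]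
  have hx' : (0:ℝ) < x := by exact_mod_cast hx
  exact rpow_pos_of_pos hx' _

lemma qdA_lower {μ : ℝ} (hμ : 2 ≤ μ) (n : ℕ) :
    ((qd (fA μ) (n+1) : ℝ))^(μ-1) ≤ (qd (fA μ) (n+2) : ℝ) := by
  have h1 : ad (fA μ) n * qd (fA μ) (n+1) ≤ qd (fA μ) (n+2) := by
    rw [qd_succ_succ]; omega
  have h1R : ((ad (fA μ) n : ℝ)) * (qd (fA μ) (n+1) : ℝ) ≤ (qd (fA μ) (n+2) : ℝ) := by
    exact_mod_cast h1
  have h2 : ((qd (fA μ) (n+1) : ℝ))^(μ-2) ≤ (ad (fA μ) n : ℝ) := Nat.le_ceil _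
  have hq := qd_pos_real (f := fA μ) (n+1)
  have h3 : ((qd (fA μ) (n+1) : ℝ))^(μ-1)
      = ((qd (fA μ) (n+1) : ℝ))^(μ-2) * (qd (fA μ) (n+1) : ℝ) := by
    rw [show μ-1 = (μ-2)+1 by ring, rpow_add hq, Real.rpow_one]
  rw [h3]
  calc ((qd (fA μ) (n+1) : ℝ))^(μ-2) * (qd (fA μ) (n+1) : ℝ)
      ≤ (ad (fA μ) n : ℝ) * (qd (fA μ) (n+1) : ℝ) :=
        mul_le_mul_of_nonneg_right h2 (le_of_lt hq)
    _ ≤ _ := h1R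

lemma uA_ge {μ : ℝ} (hμ : 2 ≤ μ) (n : ℕ) (hn : 1 ≤ n) :
    ((qd (fA μ) n : ℝ))^μ ≤ uc (fA μ) n := by
  obtain ⟨m, rfl⟩ := Nat.exists_eq_add_of_le hn
  have hq := qd_pos_real (f := fA μ) (1+m)
  have h1 := qdA_lower hμ m
  have hle : ((qd (fA μ) (1+m) : ℝ))^(μ-1) ≤ (qd (fA μ) (1+m+1) : ℝ) := by
    rw [show 1+m = m+1 by omega, show m+1+1 = m+2 by omega]
    exact h1
  have h3 : ((qd (fA μ) (1+m) : ℝ))^μ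
      = (qd (fA μ) (1+m) : ℝ) * ((qd (fA μ) (1+m) : ℝ))^(μ-1) := by
    have h5 := rpow_add hq 1 (μ-1)
    rw [show (1:ℝ)+(μ-1) = μ by ring, Real.rpow_one] at h5
    exact h5
  rw [h3, uc]
  apply mul_le_mul_of_nonneg_left hle (le_of_lt hq)

lemma qdA_upper {μ : ℝ} (hμ : 2 ≤ μ) (n : ℕ) :
    (qd (fA μ) (n+2) : ℝ) ≤ 3 * ((qd (fA μ) (n+1) : ℝ))^(μ-1) := by
  have hq := qd_pos_real (f := fA μ) (n+1)
  have hq1 := one_le_qd_real (f := fA μ) (n+1)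
  have hcl : (ad (fA μ) n : ℝ) ≤ ((qd (fA μ) (n+1) : ℝ))^(μ-2) + 1 :=
    le_of_lt (Nat.ceil_lt_add_one (by positivity))
  have hmono : qd (fA μ) n ≤ qd (fA μ) (n+1) := qd_le_succ (hfA hμ) n
  have hmonoR : (qd (fA μ) n : ℝ) ≤ (qd (fA μ) (n+1) : ℝ) := by exact_mod_cast hmono
  have hrec : (qd (fA μ) (n+2) : ℝ)
      = (ad (fA μ) n : ℝ) * (qd (fA μ) (n+1) : ℝ) + (qd (fA μ) n : ℝ) := by
    rw [qd_succ_succ]; push_cast; ring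
  have h3 : ((qd (fA μ) (n+1) : ℝ))^(μ-2) * (qd (fA μ) (n+1) : ℝ)
      = ((qd (fA μ) (n+1) : ℝ))^(μ-1) := by
    rw [show μ-1 = (μ-2)+1 by ring, rpow_add hq, Real.rpow_one]
  have h4 : (qd (fA μ) (n+1) : ℝ) ≤ ((qd (fA μ) (n+1) : ℝ))^(μ-1) := by
    nth_rewrite 1 [← Real.rpow_one (qd (fA μ) (n+1) : ℝ)]
    exact rpow_le_rpow_of_exponent_le hq1 (by linarith)
  rw [hrec]
  nlinarith [rpow_pos_of_pos hq (μ-2)]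

lemma boundA {μ : ℝ} (hμ : 2 ≤ μ) :
    ∀ (p : ℤ) (Q : ℕ), 1 ≤ Q → 1/(6*(Q:ℝ)^μ) ≤ |αc (fA μ) - (p:ℝ)/(Q:ℝ)| := by
  intro p Q hQ
  obtain ⟨n, hn1, hle, hlt, hb⟩ := key_lower (hfA hμ) p Q hQ
  have hQpos : (0:ℝ) < Q := by exact_mod_cast hQ
  have hQ1R : (1:ℝ) ≤ Q := by exact_mod_cast hQ
  obtain ⟨m, rfl⟩ := Nat.exists_eq_add_of_le hn1
  have hup := qdA_upper hμ m
  have hleR : (qd (fA μ) (1+m) : ℝ) ≤ Q := by exact_mod_cast hle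
  have hQm : ((qd (fA μ) (1+m) : ℝ))^(μ-1) ≤ (Q:ℝ)^(μ-1) :=
    rpow_le_rpow (by positivity) hleR (by linarith)
  have hup' : (qd (fA μ) (1+m+1) : ℝ) ≤ 3 * (Q:ℝ)^(μ-1) := by
    rw [show 1+m+1 = m+2 by omega]
    calc (qd (fA μ) (m+2) : ℝ) ≤ 3 * ((qd (fA μ) (m+1) : ℝ))^(μ-1) := hup
      _ = 3 * ((qd (fA μ) (1+m) : ℝ))^(μ-1) := by rw [show m+1 = 1+m by omega]
      _ ≤ 3 * (Q:ℝ)^(μ-1) := by linarith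
  have hsplit : (Q:ℝ)^μ = (Q:ℝ) * (Q:ℝ)^(μ-1) := by
    have h5 := rpow_add hQpos 1 (μ-1)
    rw [show (1:ℝ)+(μ-1) = μ by ring, Real.rpow_one] at h5
    exact h5
  have hq2 := qd_pos_real (f := fA μ) (1+m+1)
  calc 1/(6*(Q:ℝ)^μ) ≤ 1/(2 * (Q:ℝ) * (qd (fA μ) (1+m+1) : ℝ)) := by
        apply one_div_le_one_div_of_le (by positivity)
        rw [hsplit]
        nlinarith [rpow_pos_of_pos hQpos (μ-1)]
    _ ≤ |αc (fA μ) - (p:ℝ)/(Q:ℝ)| := hb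

lemma memA {μ : ℝ} (hμ : 2 ≤ μ) {ν : ℝ} (hν : ν ≤ μ) :
    ν ∈ approxExponents (αc (fA μ)) := by
  apply mem_approx (hfA hμ) ν 1 le_rfl
  intro k hk
  calc ((qd (fA μ) k : ℝ))^ν ≤ ((qd (fA μ) k : ℝ))^μ :=
        rpow_le_rpow_of_exponent_le (one_le_qd_real k) hν
    _ ≤ uc (fA μ) k := uA_ge hμ k hk

lemma approxA {μ : ℝ} (hμ : 2 ≤ μ) : approxExponents (αc (fA μ)) = Set.Iic μ := by
  ext ν
  simp only [Set.mem_Iic]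
  constructor
  · intro h
    by_contra hc
    push_neg at hc
    exact not_mem_approx (αc (fA μ)) (by linarith : (0:ℝ) ≤ μ) hc (boundA hμ) h
  · intro h
    exact memA hμ h

lemma expA {μ : ℝ} (hμ : 2 ≤ μ) : irrationalityExponent (αc (fA μ)) = (μ : EReal) := by
  rw [irrationalityExponent, approxA hμ]
  apply le_antisymm
  · apply sSup_le
    rintro x ⟨ν, hν, rfl⟩
    simp only [Set.mem_Iic] at hν
    exact EReal.coe_le_coe_iff.mpr hν
  · exact le_sSup ⟨μ, Set.mem_Iic.mpr le_rfl, rfl⟩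

/-! ### Case B : infinite exponent -/

def fB : ℕ → ℕ → ℕ := fun n x => x^(n+1)

lemma hfB : Hf fB := fun n x hx => Nat.one_le_pow _ _ hx

lemma memB (ν : ℝ) : ν ∈ approxExponents (αc fB) := by
  apply mem_approx hfB ν (⌈|ν|⌉₊ + 1) (by omega)
  intro k hk
  have hq1 := one_le_qd_real (f := fB) k
  have h1 : ((qd fB k : ℝ))^ν ≤ ((qd fB k : ℝ))^((k:ℕ):ℝ) := by
    apply rpow_le_rpow_of_exponent_le hq1
    have h2 : |ν| ≤ (⌈|ν|⌉₊ : ℝ) := Nat.le_ceil _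
    have h3 : (⌈|ν|⌉₊ + 1 : ℕ) ≤ k := hk
    have h4 : ((⌈|ν|⌉₊ : ℝ) + 1) ≤ (k:ℝ) := by exact_mod_cast h3
    calc ν ≤ |ν| := le_abs_self ν
      _ ≤ (k:ℝ) := by linarith
  have h2 : ((qd fB k : ℝ))^((k:ℕ):ℝ) = ((qd fB k ^ k : ℕ) : ℝ) := by
    rw [Real.rpow_natCast]
    push_cast
    ring
  have h3 : qd fB k ^ k ≤ qd fB k * qd fB (k+1) := by
    obtain ⟨m, rfl⟩ := Nat.exists_eq_add_of_le (show 1 ≤ k by omega)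
    have hrec : qd fB (1+m+1) = ad fB m * qd fB (m+1) + qd fB m := by
      rw [show 1+m+1 = m+2 by omega]
      exact qd_succ_succ _ m
    have had : ad fB m = qd fB (m+1) ^ (m+1) := rfl
    have hq := one_le_qd (f := fB) (m+1)
    have hq0 := one_le_qd (f := fB) (1+m)
    have : qd fB (1+m) ^ (1+m) ≤ qd fB (1+m+1) := by
      rw [hrec, had, show 1+m = m+1 by omega]
      have hpow : qd fB (m+1) ^ (m+1) ≤ qd fB (m+1) ^ (m+1) * qd fB (m+1) := by
        nlinarith [Nat.one_le_pow (m+1) (qd fB (m+1)) hq]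
      nlinarith [Nat.one_le_pow (m+1) (qd fB (m+1)) hq]
    nlinarith
  have h3R : ((qd fB k ^ k : ℕ) : ℝ) ≤ uc fB k := by
    rw [uc]; exact_mod_cast h3
  calc ((qd fB k : ℝ))^ν ≤ ((qd fB k : ℝ))^((k:ℕ):ℝ) := h1
    _ = ((qd fB k ^ k : ℕ) : ℝ) := h2
    _ ≤ uc fB k := h3R

lemma expB : irrationalityExponent (αc fB) = ⊤ := by
  rw [irrationalityExponent, sSup_eq_top]
  intro b hb
  induction b with
  | bot => exact ⟨((0:ℝ) : EReal), ⟨0, memB 0, rfl⟩, EReal.bot_lt_coe 0⟩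
  | coe x => exact ⟨((x+1 : ℝ) : EReal), ⟨x+1, memB (x+1), rfl⟩, by exact_mod_cast lt_add_one x⟩
  | top => exact absurd hb (lt_irrefl ⊤)

end IrrExp

/-- For every `μ₀ ∈ [2, ∞]` there is an irrational `α` with
irrationality exponent exactly `μ₀`; in particular there exist Liouville numbers,
i.e. irrationals with infinite irrationality exponent. -/
theorem exists_irrational_with_irrationalityExponent :
    (∀ μ₀ : EReal, 2 ≤ μ₀ →
      ∃ α : ℝ, Irrational α ∧ irrationalityExponent α = μ₀) ∧
    ∃ α : ℝ, Irrational α ∧ irrationalityExponent α = ⊤ := by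
  constructor
  · intro μ₀ h2
    by_cases htop : μ₀ = ⊤
    · exact ⟨IrrExp.αc IrrExp.fB, IrrExp.irrational_αc IrrExp.hfB, htop ▸ IrrExp.expB⟩
    · have hbot : μ₀ ≠ ⊥ := by
        rintro rfl
        have hb2 : (⊥:EReal) < ((2:ℝ):EReal) := EReal.bot_lt_coe 2
        rw [show ((2:ℝ):EReal) = (2:EReal) by norm_cast] at hb2
        exact absurd h2 (not_le_of_gt hb2)
      have hμ0 : μ₀ = ((μ₀.toReal : ℝ) : EReal) := (EReal.coe_toReal htop hbot).symm
      have hμ : 2 ≤ μ₀.toReal := by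
        rw [hμ0] at h2
        rw [show (2:EReal) = ((2:ℝ):EReal) by norm_cast] at h2
        exact EReal.coe_le_coe_iff.mp h2
      exact ⟨IrrExp.αc (IrrExp.fA μ₀.toReal),
        IrrExp.irrational_αc (IrrExp.hfA hμ),
        by rw [hμ0]; exact IrrExp.expA hμ⟩
  · exact ⟨IrrExp.αc IrrExp.fB, IrrExp.irrational_αc IrrExp.hfB, IrrExp.expB⟩
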